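/- arXiv:2508.09280 — 2 statements merged into one kernel-verified Lean document; each statement's English description precedes it below -/
import Mathlib

section
/- Assume |J| = 1, the travel times τ have a differentiable convex potential Φ (τ(x) = ∇Φ(x) on ℱ), and all externality factors g_{i,p} are constant. Then for all prices λ₁ < λ₂ and all Wardrop equilibria x₁ ∈ WE(λ₁) and x₂ ∈ WE(λ₂), it holds that G(x₁) ≥ G(x₂) and Φ(x₁) ≤ Φ(x₂). -/
open Finset

variable {I : Type*} [Fintype I] [DecidableEq I]
  {P : I → Type*} [∀ i, Fintype (P i)] [∀ i, DecidableEq (P i)]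

/-- A flow is feasible if it is nonnegative and satisfies all demands. -/
def Feasible (d : I → ℝ) (x : ∀ i, P i → ℝ) : Prop :=
  (∀ i p, 0 ≤ x i p) ∧ ∀ i, ∑ p, x i p = d i

/-- Wardrop equilibrium with respect to a cost function. -/
def IsWardrop (d : I → ℝ) (c : (∀ i, P i → ℝ) → ∀ i, P i → ℝ)
    (x : ∀ i, P i → ℝ) : Prop :=
  Feasible d x ∧ ∀ i p, 0 < x i p → ∀ q, c x i p ≤ c x i q

/-- Total externality for a single externality class with constant factors `g`. -/
def Gtot (g : ∀ i, P i → ℝ) (x : ∀ i, P i → ℝ) : ℝ :=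
  ∑ i, ∑ p, g i p * x i p

/-!
Write `⟨a, b⟩ = ∑ i, ∑ p, a i p * b i p`. The Wardrop condition at `x₁` gives the variational
inequality `⟨τ x₁ + λ₁ g, x₂ - x₁⟩ ≥ 0`, and convexity of `Φ` gives the gradient inequality
`⟨τ x₁, x₂ - x₁⟩ ≤ Φ x₂ - Φ x₁`; symmetrically with `x₁` and `x₂` swapped. Adding all four yields
`(λ₂ - λ₁) (G x₂ - G x₁) ≤ 0`, and feeding `G x₂ ≤ G x₁` and `λ₁ ≥ 0` back into the first
variational inequality yields `Φ x₁ ≤ Φ x₂`.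
-/

theorem ConvexOn.fderiv_sub_le {E : Type*} [NormedAddCommGroup E] [NormedSpace ℝ E]
    {s : Set E} {f : E → ℝ} {x y : E} (hf : ConvexOn ℝ s f) (hx : x ∈ s) (hy : y ∈ s)
    (hfx : DifferentiableAt ℝ f x) :
    fderiv ℝ f x (y - x) ≤ f y - f x := by
  let ℓ : ℝ →ᵃ[ℝ] E := AffineMap.lineMap x y
  have hmaps : Set.MapsTo ℓ (Set.Icc 0 1) s := by
    simpa only [ℓ, Set.mapsTo_iff_image_subset, ← segment_eq_image_lineMap]
      using hf.1.segment_subset hx hy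
  have hconv : ConvexOn ℝ (Set.Icc 0 1) (f ∘ ℓ) :=
    (hf.comp_affineMap ℓ).subset hmaps (convex_Icc 0 1)
  have hderiv : HasDerivAt (f ∘ ℓ) (fderiv ℝ f x (y - x)) 0 := by
    have hfℓ : HasFDerivAt f (fderiv ℝ f x) (ℓ 0) := by
      rw [show ℓ 0 = x from AffineMap.lineMap_apply_zero x y]
      exact hfx.hasFDerivAt
    exact hfℓ.comp_hasDerivAt 0 AffineMap.hasDerivAt_lineMap
  simpa [slope_def_field, ℓ] using
    hconv.le_slope_of_hasDerivAt (by simp) (by simp) one_pos hderiv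

theorem sum_mul_le_sum_mul_of_pos_imp_le {ι : Type*} [Fintype ι] {c x y : ι → ℝ}
    (hx : 0 ≤ x) (hy : 0 ≤ y) (hxy : ∑ p, x p = ∑ p, y p)
    (hmin : ∀ p, 0 < x p → ∀ q, c p ≤ c q) :
    ∑ p, c p * x p ≤ ∑ p, c p * y p := by
  rcases isEmpty_or_nonempty ι with hι | hι
  · simp
  set m := univ.inf' univ_nonempty c
  have hm : ∀ p, m ≤ c p := fun p => inf'_le c (mem_univ p)
  have hcx : ∀ p, c p * x p = m * x p := fun p => by
    rcases (hx p).lt_or_eq with hp | hp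
    · rw [le_antisymm (le_inf' _ _ fun q _ => hmin p hp q) (hm p)]
    · simp [← hp]
  calc ∑ p, c p * x p = m * ∑ p, y p := by simp only [hcx, ← mul_sum, hxy]
    _ ≤ ∑ p, c p * y p := by
      rw [mul_sum]; exact sum_le_sum fun p _ => mul_le_mul_of_nonneg_right (hm p) (hy p)

omit [DecidableEq I] [∀ i, DecidableEq (P i)] in
theorem IsWardrop.sum_mul_sub_nonneg {d : I → ℝ} {c : (∀ i, P i → ℝ) → ∀ i, P i → ℝ}
    {x y : ∀ i, P i → ℝ} (hx : IsWardrop d c x) (hy : Feasible d y) :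
    0 ≤ ∑ i, ∑ p, c x i p * (y i p - x i p) := by
  simp only [mul_sub, sum_sub_distrib, sub_nonneg]
  refine sum_le_sum fun i _ => sum_mul_le_sum_mul_of_pos_imp_le (hx.1.1 i) (hy.1 i) ?_ (hx.2 i)
  rw [hx.1.2 i, hy.2 i]

theorem ContinuousLinearMap.apply_eq_sum_single_single (L : (∀ i, P i → ℝ) →L[ℝ] ℝ)
    (v : ∀ i, P i → ℝ) :
    L v = ∑ i, ∑ p, L (Pi.single i (Pi.single p 1)) * v i p := by
  conv_lhs => rw [← Finset.univ_sum_single v]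
  refine (map_sum L _ _).trans (sum_congr rfl fun i _ => ?_)
  conv_lhs => rw [pi_eq_sum_univ' (v i)]
  rw [← ContinuousLinearMap.single_apply ℝ, map_sum, map_sum]
  simp [mul_comm]

omit [DecidableEq I] [∀ i, DecidableEq (P i)] in
theorem sum_add_mul_mul_sub (t g x y : ∀ i, P i → ℝ) (lam : ℝ) :
    ∑ i, ∑ p, (t i p + lam * g i p) * (y i p - x i p)
      = ∑ i, ∑ p, t i p * (y i p - x i p) + lam * (Gtot g y - Gtot g x) := by
  simp only [Gtot, add_mul, sum_add_distrib, mul_sub, sum_sub_distrib, mul_sum, mul_assoc]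
  ring

theorem externality_monotone_in_price_general
    (d : I → ℝ)
    (τ : (∀ i, P i → ℝ) → ∀ i, P i → ℝ)
    (Φ : (∀ i, P i → ℝ) → ℝ)
    (hΦdiff : Differentiable ℝ Φ) (hΦconv : ConvexOn ℝ Set.univ Φ)
    (hΦgrad : ∀ x, Feasible d x →
      ∀ i p, fderiv ℝ Φ x (Pi.single i (Pi.single p (1 : ℝ))) = τ x i p)
    (g : ∀ i, P i → ℝ)
    (lam₁ lam₂ : ℝ) (hlam₁ : 0 ≤ lam₁) (hlt : lam₁ < lam₂)
    (x₁ x₂ : ∀ i, P i → ℝ)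
    (hx₁ : IsWardrop d (fun y i p => τ y i p + lam₁ * g i p) x₁)
    (hx₂ : IsWardrop d (fun y i p => τ y i p + lam₂ * g i p) x₂) :
    Gtot g x₂ ≤ Gtot g x₁ ∧ Φ x₁ ≤ Φ x₂ := by
  have hΦ : ∀ x y, Feasible d x → ∑ i, ∑ p, τ x i p * (y i p - x i p) ≤ Φ y - Φ x := by
    intro x y hx
    have := hΦconv.fderiv_sub_le (Set.mem_univ x) (Set.mem_univ y) (hΦdiff x)
    rw [(fderiv ℝ Φ x).apply_eq_sum_single_single] at this
    simpa only [hΦgrad x hx, Pi.sub_apply] using this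
  have hΦ₁₂ := hΦ x₁ x₂ hx₁.1
  have hΦ₂₁ := hΦ x₂ x₁ hx₂.1
  have hvi₁ := hx₁.sum_mul_sub_nonneg hx₂.1
  have hvi₂ := hx₂.sum_mul_sub_nonneg hx₁.1
  rw [sum_add_mul_mul_sub] at hvi₁ hvi₂
  have hG : Gtot g x₂ ≤ Gtot g x₁ := by nlinarith
  exact ⟨hG, by nlinarith⟩

/-- for a single externality class, travel times with a differentiable
convex potential `Φ` and constant externality factors, the total externality at
equilibrium is non-increasing and the potential non-decreasing in the price:
if `λ₁ < λ₂`, `x₁ ∈ WE(λ₁)`, `x₂ ∈ WE(λ₂)`, then `G(x₁) ≥ G(x₂)` and `Φ(x₁) ≤ Φ(x₂)`. -/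
theorem externality_monotone_in_price
    [∀ i, Nonempty (P i)]
    (d : I → ℝ) (hd : ∀ i, 0 < d i)
    (τ : (∀ i, P i → ℝ) → ∀ i, P i → ℝ)
    (Φ : (∀ i, P i → ℝ) → ℝ)
    (hΦdiff : Differentiable ℝ Φ) (hΦconv : ConvexOn ℝ Set.univ Φ)
    (hΦgrad : ∀ x, Feasible d x →
      ∀ i p, fderiv ℝ Φ x (Pi.single i (Pi.single p (1 : ℝ))) = τ x i p)
    (g : ∀ i, P i → ℝ) (hg : ∀ i p, 0 ≤ g i p)
    (lam₁ lam₂ : ℝ) (hlam₁ : 0 ≤ lam₁) (hlt : lam₁ < lam₂)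
    (x₁ x₂ : ∀ i, P i → ℝ)
    (hx₁ : IsWardrop d (fun y i p => τ y i p + lam₁ * g i p) x₁)
    (hx₂ : IsWardrop d (fun y i p => τ y i p + lam₂ * g i p) x₂) :
    Gtot g x₂ ≤ Gtot g x₁ ∧ Φ x₁ ≤ Φ x₂ :=
  externality_monotone_in_price_general d τ Φ hΦdiff hΦconv hΦgrad g lam₁ lam₂ hlam₁ hlt x₁ x₂ hx₁
    hx₂
end

section
/- Assume |J| = 1, the travel times τ have a differentiable convex potential Φ (τ(x) = ∇Φ(x) on ℱ), all externality factors g_{i,p} are constant, and the budget B ∈ ℝ_{≥0} is feasible. Define λ̲ = min{λ ≥ 0 : there exists x ∈ WE(λ) with G(x) ≤ B} and λ̄ = sup({λ ≥ 0 : there exists x ∈ WE(λ) with G(x) ≥ B} ∪ {0}) ∈ [0, ∞]. Then a price λ ∈ ℝ_{≥0} is a market equilibrium price for the tradable credit scheme (B, g), i.e., there exists x ∈ WE(λ) with G(x) ≤ B and λ·(G(x) − B) = 0, if and only if λ̲ ≤ λ ≤ λ̄. -/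
open Finset

variable {I : Type*} [Fintype I] [DecidableEq I]
  {P : I → Type*} [∀ i, Fintype (P i)] [∀ i, DecidableEq (P i)]

/-- `λ` is a market equilibrium price for the tradable credit scheme `(B, g)`. -/
def IsMarketEqPrice (d : I → ℝ) (τ : (∀ i, P i → ℝ) → ∀ i, P i → ℝ)
    (g : ∀ i, P i → ℝ) (B : ℝ) (lam : ℝ) : Prop :=
  ∃ x, IsWardrop d (fun y i p => τ y i p + lam * g i p) x ∧
    Gtot g x ≤ B ∧ lam * (Gtot g x - B) = 0

/-!
Since `τ` is the gradient of the convex potential `Φ`, the Wardrop equilibria at price `λ` are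
exactly the minimizers of `Φ + λ G` over the compact convex set of feasible flows. Comparing the
optimality of two such minimizers shows that `G` at a minimizer is antitone in `λ`, and
compactness makes the sets of prices admitting a minimizer with `G ≤ B`, respectively `G ≥ B`,
closed. Hence the first set is the ray `[λ̲, ∞)` and the second an interval starting at `0`
whose supremum is `λ̄`. For `0 < λ ∈ [λ̲, λ̄]` there are minimizers on both sides of `B`, and the
convex set of minimizers contains one with `G = B` by the intermediate value theorem. The first
set is nonempty by an exact penalty argument: the minimizer of `Φ` among the flows of least
externality is an equilibrium as soon as `λ` exceeds the finitely many ratios between travel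
time savings and externality increases.
-/

section ParametricMinimization

open Set

lemma isClosed_setOf_exists_mem_of_isCompact {X Y : Type*} [TopologicalSpace X]
    [TopologicalSpace Y] {K : Set Y} (hK : IsCompact K) {R : X → Y → Prop}
    (hR : IsClosed {q : X × Y | R q.1 q.2}) : IsClosed {a | ∃ y ∈ K, R a y} := by
  have := isCompact_iff_compactSpace.mp hK
  have himage : {a | ∃ y ∈ K, R a y} = Prod.fst '' {q : X × K | R q.1 q.2} := by
    ext a
    simp
  rw [himage]
  exact isClosedMap_fst_of_compactSpace _
    (hR.preimage (continuous_id.prodMap continuous_subtype_val))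

lemma ConvexOn.add_fderiv_sub_le {E : Type*} [NormedAddCommGroup E] [NormedSpace ℝ E]
    {s : Set E} {f : E → ℝ} {x y : E} (hf : ConvexOn ℝ s f) (hx : x ∈ s) (hy : y ∈ s)
    (hfx : DifferentiableAt ℝ f x) : f x + fderiv ℝ f x (y - x) ≤ f y := by
  let γ : ℝ →ᵃ[ℝ] E := AffineMap.lineMap x y
  have hderiv : HasDerivAt (f ∘ γ) (fderiv ℝ f x (y - x)) 0 := by
    have hfx' : HasFDerivAt f (fderiv ℝ f x) (γ 0) := by simpa [γ] using hfx.hasFDerivAt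
    exact hfx'.comp_hasDerivAt 0 AffineMap.hasDerivAt_lineMap
  have hslope := (hf.comp_affineMap γ).le_slope_of_hasDerivAt (x := 0) (y := 1)
    (by simpa [γ] using hx) (by simpa [γ] using hy) zero_lt_one hderiv
  simp only [slope_def_field, Function.comp_apply, γ, AffineMap.lineMap_apply_one,
    AffineMap.lineMap_apply_zero, sub_zero, div_one] at hslope
  linarith

lemma le_of_isMinOn_add_mul_of_lt {α : Type*} {K : Set α} {Φ G : α → ℝ} {l l' : ℝ} {x y : α}
    (hx : IsMinOn (fun z => Φ z + l * G z) K x) (hy : IsMinOn (fun z => Φ z + l' * G z) K y)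
    (hxK : x ∈ K) (hyK : y ∈ K) (hll' : l < l') : G y ≤ G x := by
  have hxy : Φ x + l * G x ≤ Φ y + l * G y := hx hyK
  have hyx : Φ y + l' * G y ≤ Φ x + l' * G x := hy hxK
  nlinarith

lemma IsCompact.exists_isMinOn_isMinOn_sublevel {X : Type*} [TopologicalSpace X] {K : Set X}
    (hK : IsCompact K) (hne : K.Nonempty) {f g : X → ℝ} (hf : Continuous f)
    (hg : Continuous g) : ∃ x ∈ K, IsMinOn f K x ∧ IsMinOn g {y ∈ K | f y ≤ f x} x := by
  obtain ⟨x₀, hx₀K, hx₀⟩ := hK.exists_isMinOn hne hf.continuousOn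
  have hsub : IsCompact {y ∈ K | f y ≤ f x₀} := hK.inter_right (isClosed_le hf continuous_const)
  obtain ⟨x, ⟨hxK, hxf⟩, hx⟩ := hsub.exists_isMinOn ⟨x₀, hx₀K, le_rfl⟩ hg.continuousOn
  exact ⟨x, hxK, fun y hy => hxf.trans (hx₀ hy), fun y hy => hx ⟨hy.1, hy.2.trans hxf⟩⟩

lemma ConvexOn.add_mul_of_isLinearMap {E : Type*} [AddCommGroup E] [Module ℝ E] {s : Set E}
    {Φ G : E → ℝ} (hΦ : ConvexOn ℝ s Φ) (hG : IsLinearMap ℝ G) (l : ℝ) :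
    ConvexOn ℝ s (fun z => Φ z + l * G z) :=
  hΦ.add ((l • hG.mk' G).convexOn hΦ.1)

lemma IsUpperSet.mem_iff_csInf_le {α : Type*} [ConditionallyCompleteLinearOrder α]
    [TopologicalSpace α] [OrderTopology α] {S : Set α} (hS : IsUpperSet S) (hc : IsClosed S)
    (hne : S.Nonempty) (hbdd : BddBelow S) {a : α} : a ∈ S ↔ sInf S ≤ a :=
  ⟨fun ha => csInf_le hbdd ha, fun ha => hS ha (hc.csInf_mem hne hbdd)⟩

lemma exists_mem_le_of_coe_le_sSup {S : Set ℝ} (hc : IsClosed S) {l : ℝ} (hl : 0 < l)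
    (h : (l : EReal) ≤ sSup ((fun μ : ℝ => (μ : EReal)) '' S ∪ {0})) : ∃ μ ∈ S, l ≤ μ := by
  by_contra! hlt
  have hbelow : ∀ b, 0 ≤ b → b < l → ∃ μ ∈ S, b < μ := by
    intro b hb hbl
    obtain ⟨a, ha, hba⟩ := lt_sSup_iff.mp ((EReal.coe_lt_coe_iff.mpr hbl).trans_le h)
    rcases ha with ⟨μ, hμ, rfl⟩ | rfl
    · exact ⟨μ, hμ, EReal.coe_lt_coe_iff.mp hba⟩
    · exact absurd hba (not_lt.mpr (EReal.coe_nonneg.mpr hb))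
  have hlub : IsLUB S l := by
    refine ⟨fun μ hμ => (hlt μ hμ).le, fun b hb => ?_⟩
    by_contra! hbl
    obtain ⟨μ, hμ, hbμ⟩ := hbelow (max b 0) (le_max_right _ _) (max_lt hbl hl)
    exact ((le_max_left b 0).trans_lt hbμ).not_ge (hb hμ)
  obtain ⟨μ, hμ, -⟩ := hbelow 0 le_rfl hl
  exact (hlt l (hlub.mem_of_isClosed ⟨μ, hμ⟩ hc)).false

lemma exists_nonneg_forall_le_mul {ι : Type*} [Fintype ι] (a b : ι → ℝ) :
    ∃ L, 0 ≤ L ∧ ∀ k, 0 < b k → a k ≤ L * b k :=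
  ⟨∑ k, |a k / b k|, sum_nonneg fun _ _ => abs_nonneg _, fun k hk => (div_le_iff₀ hk).mp
    ((le_abs_self _).trans (single_le_sum (fun j _ => abs_nonneg (a j / b j)) (mem_univ k)))⟩

def minPrices {X : Type*} (K : Set X) (Φ G : X → ℝ) (C : Set ℝ) : Set ℝ :=
  {l | 0 ≤ l ∧ ∃ x ∈ K, IsMinOn (fun z => Φ z + l * G z) K x ∧ G x ∈ C}

variable {X : Type*} [TopologicalSpace X] {K : Set X} {Φ G : X → ℝ}

lemma isClosed_minPrices (hK : IsCompact K) (hΦ : Continuous Φ) (hG : Continuous G)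
    {C : Set ℝ} (hC : IsClosed C) : IsClosed (minPrices K Φ G C) := by
  have hset : minPrices K Φ G C =
      {l | ∃ x ∈ K, 0 ≤ l ∧ IsMinOn (fun z => Φ z + l * G z) K x ∧ G x ∈ C} := by
    ext l
    exact ⟨fun ⟨hl, x, hxK, hx⟩ => ⟨x, hxK, hl, hx⟩, fun ⟨x, hxK, hl, hx⟩ => ⟨hl, x, hxK, hx⟩⟩
  rw [hset]
  refine isClosed_setOf_exists_mem_of_isCompact hK ?_
  simp only [isMinOn_iff, ofPred_and, ofPred_forall]
  refine (isClosed_le continuous_const continuous_fst).inter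
    ((isClosed_iInter fun y => isClosed_iInter fun _ => isClosed_le ?_ ?_).inter
      (hC.preimage (hG.comp continuous_snd))) <;> fun_prop

lemma isUpperSet_minPrices_Iic (hK : IsCompact K) (hΦ : Continuous Φ) (hG : Continuous G)
    (B : ℝ) : IsUpperSet (minPrices K Φ G (Iic B)) := by
  rintro l l' hll' ⟨hl, x, hxK, hx, hxB⟩
  rcases hll'.eq_or_lt with rfl | hlt
  · exact ⟨hl, x, hxK, hx, hxB⟩
  obtain ⟨y, hyK, hy⟩ := hK.exists_isMinOn ⟨x, hxK⟩ (by fun_prop : Continuous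
    (fun z => Φ z + l' * G z)).continuousOn
  exact ⟨hl.trans hll', y, hyK, hy, (le_of_isMinOn_add_mul_of_lt hx hy hxK hyK hlt).trans hxB⟩

lemma mem_minPrices_Ici_of_le (hK : IsCompact K) (hΦ : Continuous Φ) (hG : Continuous G)
    {B l l' : ℝ} (hl : 0 ≤ l) (hll' : l ≤ l') (hl' : l' ∈ minPrices K Φ G (Ici B)) :
    l ∈ minPrices K Φ G (Ici B) := by
  obtain ⟨-, y, hyK, hy, hyB⟩ := hl'
  rcases hll'.eq_or_lt with rfl | hlt
  · exact ⟨hl, y, hyK, hy, hyB⟩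
  obtain ⟨x, hxK, hx⟩ := hK.exists_isMinOn ⟨y, hyK⟩ (by fun_prop : Continuous
    (fun z => Φ z + l * G z)).continuousOn
  exact ⟨hl, x, hxK, hx, le_trans hyB (le_of_isMinOn_add_mul_of_lt hx hy hxK hyK hlt)⟩

lemma exists_isMinOn_eq_of_le_of_le {E : Type*} [AddCommGroup E] [Module ℝ E]
    [TopologicalSpace E] [IsTopologicalAddGroup E] [ContinuousSMul ℝ E] {K : Set E} {Φ G : E → ℝ}
    (hΦ : ConvexOn ℝ K Φ) (hG : IsLinearMap ℝ G) (hGc : Continuous G) {l B : ℝ} {x₀ x₁ : E}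
    (hx₀K : x₀ ∈ K) (hx₁K : x₁ ∈ K) (hx₀ : IsMinOn (fun z => Φ z + l * G z) K x₀)
    (hx₁ : IsMinOn (fun z => Φ z + l * G z) K x₁) (h₀ : G x₀ ≤ B) (h₁ : B ≤ G x₁) :
    ∃ x ∈ K, IsMinOn (fun z => Φ z + l * G z) K x ∧ G x = B := by
  have hargmin : IsPreconnected {x ∈ K | Φ x + l * G x ≤ Φ x₀ + l * G x₀} :=
    ((hΦ.add_mul_of_isLinearMap hG l).convex_le _).isPreconnected
  obtain ⟨x, ⟨hxK, hx⟩, hxB⟩ := hargmin.intermediate_value ⟨hx₀K, le_rfl⟩ ⟨hx₁K, hx₁ hx₀K⟩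
    hGc.continuousOn ⟨h₀, h₁⟩
  exact ⟨x, hxK, fun y hy => hx.trans (hx₀ hy), hxB⟩

theorem exists_isMinOn_complementarity_iff {E : Type*} [AddCommGroup E] [Module ℝ E]
    [TopologicalSpace E] [IsTopologicalAddGroup E] [ContinuousSMul ℝ E] {K : Set E}
    {Φ G : E → ℝ} (hK : IsCompact K) (hΦ : Continuous Φ) (hΦc : ConvexOn ℝ K Φ)
    (hG : IsLinearMap ℝ G) (hGc : Continuous G) {B l : ℝ} (hl : 0 ≤ l)
    (hne : (minPrices K Φ G (Iic B)).Nonempty) :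
    (∃ x ∈ K, IsMinOn (fun z => Φ z + l * G z) K x ∧ G x ≤ B ∧ l * (G x - B) = 0) ↔
      sInf (minPrices K Φ G (Iic B)) ≤ l ∧
        (l : EReal) ≤ sSup ((fun μ : ℝ => (μ : EReal)) '' minPrices K Φ G (Ici B) ∪ {0}) := by
  rw [← (isUpperSet_minPrices_Iic hK hΦ hGc B).mem_iff_csInf_le
    (isClosed_minPrices hK hΦ hGc isClosed_Iic) hne ⟨0, fun _ h => h.1⟩]
  constructor
  · rintro ⟨x, hxK, hx, hxB, hcompl⟩
    refine ⟨⟨hl, x, hxK, hx, hxB⟩, ?_⟩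
    rcases hl.eq_or_lt with rfl | hpos
    · exact le_sSup (Or.inr EReal.coe_zero)
    · have hxB' : G x = B := sub_eq_zero.mp ((mul_eq_zero.mp hcompl).resolve_left hpos.ne')
      exact le_sSup (Or.inl ⟨l, ⟨hl, x, hxK, hx, hxB'.ge⟩, rfl⟩)
  · rintro ⟨⟨-, x₀, hx₀K, hx₀, hx₀B⟩, hhigh⟩
    rcases hl.eq_or_lt with rfl | hpos
    · exact ⟨x₀, hx₀K, hx₀, hx₀B, zero_mul _⟩
    obtain ⟨μ, hμ, hlμ⟩ :=
      exists_mem_le_of_coe_le_sSup (isClosed_minPrices hK hΦ hGc isClosed_Ici) hpos hhigh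
    obtain ⟨-, x₁, hx₁K, hx₁, hx₁B⟩ := mem_minPrices_Ici_of_le hK hΦ hGc hl hlμ hμ
    obtain ⟨x, hxK, hx, hxB⟩ :=
      exists_isMinOn_eq_of_le_of_le hΦc hG hGc hx₀K hx₁K hx₀ hx₁ hx₀B hx₁B
    exact ⟨x, hxK, hx, hxB.le, by rw [hxB, sub_self, mul_zero]⟩

end ParametricMinimization

section Flows

open Set

section

omit [Fintype I] [DecidableEq I] [∀ i, DecidableEq (P i)]

lemma isCompact_setOf_feasible (d : I → ℝ) : IsCompact {x : ∀ i, P i → ℝ | Feasible d x} := by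
  have hclosed : IsClosed {x : ∀ i, P i → ℝ | Feasible d x} := by
    simp only [Feasible, ofPred_and, ofPred_forall]
    exact (isClosed_iInter fun i => isClosed_iInter fun p =>
      isClosed_le continuous_const (by fun_prop)).inter
        (isClosed_iInter fun i => isClosed_eq (by fun_prop) continuous_const)
  refine (isCompact_univ_pi fun i => isCompact_univ_pi fun _ => isCompact_Icc (a := 0)
    (b := d i)).of_isClosed_subset hclosed fun x hx => ?_
  simp only [mem_univ_pi, Set.mem_Icc]
  exact fun i p => ⟨hx.1 i p, hx.2 i ▸ single_le_sum (fun q _ => hx.1 i q) (mem_univ p)⟩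

lemma convex_setOf_feasible (d : I → ℝ) : Convex ℝ {x : ∀ i, P i → ℝ | Feasible d x} := by
  rintro x ⟨hx, hxd⟩ y ⟨hy, hyd⟩ a b ha hb hab
  refine ⟨fun i p => ?_, fun i => ?_⟩
  · exact add_nonneg (mul_nonneg ha (hx i p)) (mul_nonneg hb (hy i p))
  · simp [sum_add_distrib, ← mul_sum, hxd, hyd, ← add_mul, hab]

lemma IsWardrop.sum_mul_le {d : I → ℝ} {c : (∀ i, P i → ℝ) → ∀ i, P i → ℝ}
    {x y : ∀ i, P i → ℝ} (hx : IsWardrop d c x) (hy : Feasible d y) (i : I) :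
    ∑ p, x i p * c x i p ≤ ∑ p, y i p * c x i p := by
  by_cases hused : ∃ p₀, 0 < x i p₀
  · obtain ⟨p₀, hp₀⟩ := hused
    have hcheapest : ∀ q, c x i p₀ ≤ c x i q := hx.2 i p₀ hp₀
    have hflat : ∀ p, x i p * c x i p = x i p * c x i p₀ := fun p => by
      rcases (hx.1.1 i p).eq_or_lt with h | h
      · simp [← h]
      · rw [le_antisymm (hx.2 i p h p₀) (hcheapest p)]
    calc ∑ p, x i p * c x i p = ∑ p, y i p * c x i p₀ := by
          rw [sum_congr rfl fun p _ => hflat p, ← sum_mul, ← sum_mul, hx.1.2 i, hy.2 i]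
      _ ≤ ∑ p, y i p * c x i p :=
          sum_le_sum fun p _ => mul_le_mul_of_nonneg_left (hcheapest p) (hy.1 i p)
  · simp only [not_exists, not_lt] at hused
    have hx0 : ∀ p, x i p = 0 := fun p => le_antisymm (hused p) (hx.1.1 i p)
    have hy0 : ∀ p, y i p = 0 := by
      have : ∑ p, y i p = 0 := by rw [hy.2 i, ← hx.1.2 i]; simp [hx0]
      exact fun p => (sum_eq_zero_iff_of_nonneg fun q _ => hy.1 i q).mp this p (mem_univ p)
    simp [hx0, hy0]

end

section

omit [DecidableEq I] [∀ i, DecidableEq (P i)]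

lemma isLinearMap_Gtot (g : ∀ i, P i → ℝ) : IsLinearMap ℝ (Gtot g) where
  map_add x y := by simp [Gtot, mul_add, sum_add_distrib]
  map_smul a x := by simp [Gtot, mul_sum, mul_left_comm]

lemma continuous_Gtot (g : ∀ i, P i → ℝ) : Continuous (Gtot g) := by
  unfold Gtot; fun_prop

noncomputable def gtotCLM (g : ∀ i, P i → ℝ) : (∀ i, P i → ℝ) →L[ℝ] ℝ :=
  LinearMap.toContinuousLinearMap (isLinearMap_Gtot g).mk'

@[simp] lemma coe_gtotCLM (g : ∀ i, P i → ℝ) : ⇑(gtotCLM g) = Gtot g := rfl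

lemma hasFDerivAt_add_mul_Gtot {Φ : (∀ i, P i → ℝ) → ℝ} {x : ∀ i, P i → ℝ}
    (hΦ : DifferentiableAt ℝ Φ x) (g : ∀ i, P i → ℝ) (l : ℝ) :
    HasFDerivAt (fun z => Φ z + l * Gtot g z) (fderiv ℝ Φ x + l • gtotCLM g) x :=
  hΦ.hasFDerivAt.add ((gtotCLM g).hasFDerivAt.const_mul l)

lemma fderiv_add_mul_Gtot_apply {Φ : (∀ i, P i → ℝ) → ℝ} {x : ∀ i, P i → ℝ}
    (hΦ : DifferentiableAt ℝ Φ x) (g : ∀ i, P i → ℝ) (l : ℝ) (v : ∀ i, P i → ℝ) :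
    fderiv ℝ (fun z => Φ z + l * Gtot g z) x v = fderiv ℝ Φ x v + l * Gtot g v := by
  simp [(hasFDerivAt_add_mul_Gtot hΦ g l).fderiv]

end

def reroute (i : I) (p q : P i) : ∀ j, P j → ℝ :=
  Pi.single i (Pi.single q 1 - Pi.single p 1)

omit [Fintype I] in
lemma Feasible.add_smul_reroute {d : I → ℝ} {x : ∀ i, P i → ℝ} (hx : Feasible d x) {i : I}
    (p q : P i) {t : ℝ} (ht : t ∈ Icc 0 (x i p)) : Feasible d (x + t • reroute i p q) := by
  refine ⟨fun j r => ?_, fun j => ?_⟩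
  · rcases eq_or_ne j i with rfl | hj
    · simp only [reroute, Pi.add_apply, Pi.smul_apply, Pi.single_eq_same, Pi.sub_apply,
        smul_eq_mul, Pi.single_apply]
      have := hx.1 j r
      split_ifs <;> subst_vars <;> nlinarith [ht.1, ht.2]
    · simp [reroute, hj, hx.1 j r]
  · rcases eq_or_ne j i with rfl | hj
    · simp [reroute, sum_add_distrib, ← mul_sum, hx.2 j]
    · simp [reroute, hj, hx.2 j]

lemma Gtot_reroute (g : ∀ i, P i → ℝ) (i : I) (p q : P i) :
    Gtot g (reroute i p q) = g i q - g i p := by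
  rw [Gtot, Fintype.sum_eq_single i fun j hj => by simp [reroute, hj]]
  simp [reroute, mul_sub, sum_sub_distrib, Pi.single_apply]

lemma ContinuousLinearMap.apply_eq_sum_mul_single (L : (∀ i, P i → ℝ) →L[ℝ] ℝ)
    (v : ∀ i, P i → ℝ) : L v = ∑ i, ∑ p, v i p * L (Pi.single i (Pi.single p 1)) := by
  have hv : v = ∑ i, ∑ p, v i p • Pi.single i (Pi.single p (1 : ℝ)) := by
    ext j r
    rw [Finset.sum_apply, Fintype.sum_eq_single j fun i hi => by simp [Pi.single_eq_of_ne hi.symm]]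
    simp [Pi.single_apply]
  conv_lhs => rw [hv]
  simp [map_sum, map_smul]

omit [Fintype I] [∀ i, Fintype (P i)] in
lemma fderiv_reroute {Φ : (∀ i, P i → ℝ) → ℝ} {τ : ∀ i, P i → ℝ} {x : ∀ i, P i → ℝ}
    (hτ : ∀ i p, fderiv ℝ Φ x (Pi.single i (Pi.single p 1)) = τ i p) (i : I) (p q : P i) :
    fderiv ℝ Φ x (reroute i p q) = τ i q - τ i p := by
  rw [reroute, Pi.single_sub, map_sub, hτ, hτ]

lemma IsMinOn.fderiv_reroute_nonneg {K : Set (∀ i, P i → ℝ)} {f : (∀ i, P i → ℝ) → ℝ}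
    {x : ∀ i, P i → ℝ} (hmin : IsMinOn f K x) (hf : DifferentiableAt ℝ f x) {i : I} {p : P i}
    (q : P i) (hxp : 0 < x i p) (hK : ∀ t ∈ Icc 0 (x i p), x + t • reroute i p q ∈ K) :
    0 ≤ fderiv ℝ f x (reroute i p q) := by
  have hseg : segment ℝ x (x + x i p • reroute i p q) ⊆ K := by
    rw [segment_eq_image']
    rintro _ ⟨θ, hθ, rfl⟩
    simpa [smul_smul] using hK (θ * x i p)
      ⟨mul_nonneg hθ.1 hxp.le, mul_le_of_le_one_left hxp.le hθ.2⟩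
  have := hmin.localize.hasFDerivWithinAt_nonneg hf.hasFDerivAt.hasFDerivWithinAt
    (mem_posTangentConeAt_of_segment_subset hseg)
  rw [map_smul, smul_eq_mul] at this
  exact nonneg_of_mul_nonneg_right this hxp

variable {d : I → ℝ} {τ : (∀ i, P i → ℝ) → ∀ i, P i → ℝ} {Φ : (∀ i, P i → ℝ) → ℝ}
  {g : ∀ i, P i → ℝ}

lemma IsWardrop.isMinOn {l : ℝ} {x : ∀ i, P i → ℝ}
    (hx : IsWardrop d (fun y i p => τ y i p + l * g i p) x) (hΦ : DifferentiableAt ℝ Φ x)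
    (hΦc : ConvexOn ℝ {y | Feasible d y} Φ)
    (hτ : ∀ i p, fderiv ℝ Φ x (Pi.single i (Pi.single p 1)) = τ x i p) :
    IsMinOn (fun z => Φ z + l * Gtot g z) {y | Feasible d y} x := by
  intro y hy
  have hgrad := (hΦc.add_mul_of_isLinearMap (isLinearMap_Gtot g) l).add_fderiv_sub_le
    hx.1 hy (hasFDerivAt_add_mul_Gtot hΦ g l).differentiableAt
  have hpairing : fderiv ℝ (fun z => Φ z + l * Gtot g z) x (y - x) =
      ∑ i, ∑ p, y i p * (τ x i p + l * g i p) - ∑ i, ∑ p, x i p * (τ x i p + l * g i p) := by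
    rw [fderiv_add_mul_Gtot_apply hΦ, ContinuousLinearMap.apply_eq_sum_mul_single, Gtot,
      mul_sum, ← sum_add_distrib, ← sum_sub_distrib]
    refine sum_congr rfl fun i _ => ?_
    rw [mul_sum, ← sum_add_distrib, ← sum_sub_distrib]
    refine sum_congr rfl fun p _ => ?_
    rw [hτ, Pi.sub_apply, Pi.sub_apply]
    ring
  have hvar := sum_le_sum fun i (_ : i ∈ Finset.univ) => hx.sum_mul_le hy i
  change Φ x + l * Gtot g x ≤ Φ y + l * Gtot g y
  linarith

lemma isWardrop_of_isMinOn {l : ℝ} {x : ∀ i, P i → ℝ} (hx : Feasible d x)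
    (hmin : IsMinOn (fun z => Φ z + l * Gtot g z) {y | Feasible d y} x)
    (hΦ : DifferentiableAt ℝ Φ x)
    (hτ : ∀ i p, fderiv ℝ Φ x (Pi.single i (Pi.single p 1)) = τ x i p) :
    IsWardrop d (fun y i p => τ y i p + l * g i p) x := by
  refine ⟨hx, fun i p hxp q => ?_⟩
  have := hmin.fderiv_reroute_nonneg (hasFDerivAt_add_mul_Gtot hΦ g l).differentiableAt q hxp
    fun t ht => hx.add_smul_reroute p q ht
  rw [fderiv_add_mul_Gtot_apply hΦ, fderiv_reroute hτ, Gtot_reroute] at this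
  linarith

lemma isWardrop_iff_isMinOn (hΦ : Differentiable ℝ Φ) (hΦc : ConvexOn ℝ {y | Feasible d y} Φ)
    (hτ : ∀ x, Feasible d x → ∀ i p, fderiv ℝ Φ x (Pi.single i (Pi.single p 1)) = τ x i p)
    (l : ℝ) (x : ∀ i, P i → ℝ) :
    IsWardrop d (fun y i p => τ y i p + l * g i p) x ↔
      Feasible d x ∧ IsMinOn (fun z => Φ z + l * Gtot g z) {y | Feasible d y} x :=
  ⟨fun hx => ⟨hx.1, hx.isMinOn (hΦ x) hΦc (hτ x hx.1)⟩,
    fun hx => isWardrop_of_isMinOn hx.1 hx.2 (hΦ x) (hτ x hx.1)⟩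

lemma exists_isWardrop_isMinOn_Gtot (hΦ : Differentiable ℝ Φ)
    (hτ : ∀ x, Feasible d x → ∀ i p, fderiv ℝ Φ x (Pi.single i (Pi.single p 1)) = τ x i p)
    (hne : ∃ x : ∀ i, P i → ℝ, Feasible d x) :
    ∃ l, 0 ≤ l ∧ ∃ x, IsWardrop d (fun y i p => τ y i p + l * g i p) x ∧
      IsMinOn (Gtot g) {y | Feasible d y} x := by
  obtain ⟨x, hxK, hxG, hxΦ⟩ := (isCompact_setOf_feasible d).exists_isMinOn_isMinOn_sublevel hne
    (continuous_Gtot g) hΦ.continuous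
  have hGreroute : ∀ i (p q : P i) (t : ℝ),
      Gtot g (x + t • reroute i p q) = Gtot g x + t * (g i q - g i p) := fun i p q t => by
    rw [(isLinearMap_Gtot g).map_add, (isLinearMap_Gtot g).map_smul, Gtot_reroute, smul_eq_mul]
  have hcheap : ∀ i p, 0 < x i p → ∀ q, g i p ≤ g i q := by
    intro i p hxp q
    have : Gtot g x ≤ Gtot g (x + x i p • reroute i p q) :=
      hxG (hxK.add_smul_reroute p q ⟨hxp.le, le_rfl⟩)
    rw [hGreroute] at this
    exact sub_nonneg.mp (nonneg_of_mul_nonneg_right (by linarith) hxp)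
  have hflat : ∀ i p, 0 < x i p → ∀ q, g i q = g i p → τ x i p ≤ τ x i q := by
    intro i p hxp q hq
    have := hxΦ.fderiv_reroute_nonneg (hΦ x) q hxp fun t ht =>
      ⟨hxK.add_smul_reroute p q ht, by rw [hGreroute, hq, sub_self, mul_zero, add_zero]⟩
    rw [fderiv_reroute (hτ x hxK)] at this
    linarith
  obtain ⟨L, hL, hLbound⟩ := exists_nonneg_forall_le_mul
    (fun k : Σ i, P i × P i => τ x k.1 k.2.1 - τ x k.1 k.2.2)
    (fun k => g k.1 k.2.2 - g k.1 k.2.1)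
  refine ⟨L, hL, x, ⟨hxK, fun i p hxp q => ?_⟩, hxG⟩
  rcases (hcheap i p hxp q).eq_or_lt with hq | hq
  · change τ x i p + L * g i p ≤ τ x i q + L * g i q
    rw [hq]
    linarith [hflat i p hxp q hq.symm]
  · linarith [hLbound ⟨i, p, q⟩ (sub_pos.mpr hq)]

end Flows

theorem market_equilibrium_price_iff_in_interval_general
    (d : I → ℝ)
    (τ : (∀ i, P i → ℝ) → ∀ i, P i → ℝ)
    (Φ : (∀ i, P i → ℝ) → ℝ)
    (hΦdiff : Differentiable ℝ Φ) (hΦconv : ConvexOn ℝ Set.univ Φ)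
    (hΦgrad : ∀ x, Feasible d x →
      ∀ i p, fderiv ℝ Φ x (Pi.single i (Pi.single p (1 : ℝ))) = τ x i p)
    (g : ∀ i, P i → ℝ)
    (B : ℝ)
    (hBfeas : ∃ x, Feasible d x ∧ Gtot g x ≤ B)
    (lam : ℝ) (hlam : 0 ≤ lam) :
    IsMarketEqPrice d τ g B lam ↔
      (sInf {l : ℝ | 0 ≤ l ∧
          ∃ x, IsWardrop d (fun y i p => τ y i p + l * g i p) x ∧ Gtot g x ≤ B} ≤ lam ∧
        (lam : EReal) ≤ sSup ((fun l : ℝ => (l : EReal)) ''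
          {l : ℝ | 0 ≤ l ∧
            ∃ x, IsWardrop d (fun y i p => τ y i p + l * g i p) x ∧ B ≤ Gtot g x}
          ∪ {(0 : EReal)})) := by
  have hconv := hΦconv.subset (Set.subset_univ _) (convex_setOf_feasible d)
  have hWE := isWardrop_iff_isMinOn (g := g) hΦdiff hconv hΦgrad
  have hprices : ∀ C, {l : ℝ | 0 ≤ l ∧
      ∃ x, IsWardrop d (fun y i p => τ y i p + l * g i p) x ∧ Gtot g x ∈ C} =
      minPrices {y | Feasible d y} Φ (Gtot g) C := by
    intro C
    ext l
    simp only [minPrices, hWE, Set.mem_ofPred_eq, and_assoc]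
  obtain ⟨x₀, hx₀, hx₀B⟩ := hBfeas
  obtain ⟨l₀, hl₀, x, hx, hxG⟩ := exists_isWardrop_isMinOn_Gtot hΦdiff hΦgrad ⟨x₀, hx₀⟩
  have hne : (minPrices {y | Feasible d y} Φ (Gtot g) (Set.Iic B)).Nonempty := by
    rw [← hprices]
    exact ⟨l₀, hl₀, x, hx, (hxG hx₀).trans hx₀B⟩
  have key := exists_isMinOn_complementarity_iff (isCompact_setOf_feasible d) hΦdiff.continuous
    hconv (isLinearMap_Gtot g) (continuous_Gtot g) hlam hne
  rw [← hprices, ← hprices] at key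
  simpa only [IsMarketEqPrice, hWE, Set.mem_Iic, Set.mem_Ici, Set.mem_ofPred_eq, and_assoc]
    using key

/-- for a single externality class, travel times with a differentiable
convex potential and constant externality factors, and a feasible budget `B`, a price
`λ ≥ 0` is a market equilibrium price for the tradable credit scheme `(B, g)` iff
`λ̲ ≤ λ ≤ λ̄`, where `λ̲ = min{λ ≥ 0 : ∃ x ∈ WE(λ), G(x) ≤ B}` and
`λ̄ = sup({λ ≥ 0 : ∃ x ∈ WE(λ), G(x) ≥ B} ∪ {0}) ∈ [0, ∞]`. -/
theorem market_equilibrium_price_iff_in_interval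
    [∀ i, Nonempty (P i)]
    (d : I → ℝ) (hd : ∀ i, 0 < d i)
    (τ : (∀ i, P i → ℝ) → ∀ i, P i → ℝ)
    (Φ : (∀ i, P i → ℝ) → ℝ)
    (hΦdiff : Differentiable ℝ Φ) (hΦconv : ConvexOn ℝ Set.univ Φ)
    (hΦgrad : ∀ x, Feasible d x →
      ∀ i p, fderiv ℝ Φ x (Pi.single i (Pi.single p (1 : ℝ))) = τ x i p)
    (g : ∀ i, P i → ℝ) (hg : ∀ i p, 0 ≤ g i p)
    (B : ℝ) (hB : 0 ≤ B)
    (hBfeas : ∃ x, Feasible d x ∧ Gtot g x ≤ B)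
    (lam : ℝ) (hlam : 0 ≤ lam) :
    IsMarketEqPrice d τ g B lam ↔
      (sInf {l : ℝ | 0 ≤ l ∧
          ∃ x, IsWardrop d (fun y i p => τ y i p + l * g i p) x ∧ Gtot g x ≤ B} ≤ lam ∧
        (lam : EReal) ≤ sSup ((fun l : ℝ => (l : EReal)) ''
          {l : ℝ | 0 ≤ l ∧
            ∃ x, IsWardrop d (fun y i p => τ y i p + l * g i p) x ∧ B ≤ Gtot g x}
          ∪ {(0 : EReal)})) :=
  market_equilibrium_price_iff_in_interval_general d τ Φ hΦdiff hΦconv hΦgrad g B hBfeas lam hlam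
end
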